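/- Let Δt ≥ 0 and let I denote the d×d identity matrix. For s ∈ ℝ and a d×d matrix F define Ψ(s)(F) := (I + (Δt − s)J) · 𝓛_L((I + sJ) · F · (I + sJ)ᴴ) · (I + (Δt − s)J)ᴴ. Then for every s ∈ [0, Δt] and every Hermitian d×d matrix F with ‖F‖₁ ≤ 1, the second derivative at s of the function r ↦ Ψ(r)(F) satisfies ‖(d²/ds²)Ψ(s)(F)‖₁ ≤ 12 · κ_L · ‖J‖₁² · e^{‖J‖₁ Δt}. -/

import Mathlib

open MeasureTheory Filter
open scoped Matrix ComplexOrder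

attribute [local instance] Matrix.normedAddCommGroup Matrix.normedSpace

/-- The positive semidefinite square root of a positive semidefinite matrix
(re-added: removed from Mathlib; this is its old definition). -/
noncomputable def Matrix.PosSemidef.sqrt {n 𝕜 : Type*} [Fintype n] [DecidableEq n] [RCLike 𝕜]
    {A : Matrix n n 𝕜} (hA : A.PosSemidef) : Matrix n n 𝕜 :=
  hA.1.eigenvectorUnitary.1 * Matrix.diagonal ((↑) ∘ (√·) ∘ hA.1.eigenvalues) *
  (star hA.1.eigenvectorUnitary : Matrix n n 𝕜)

/-- Trace norm (Schatten-1 norm) of a complex matrix: `‖A‖₁ = Tr √(Aᴴ A)`. -/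
noncomputable def traceNorm {d : ℕ} (A : Matrix (Fin d) (Fin d) ℂ) : ℝ :=
  ((Matrix.posSemidef_conjTranspose_mul_self A).sqrt).trace.re

/-- The superoperator `ρ ↦ A * ρ * B`. -/
noncomputable def sandwich {d : ℕ} (A B : Matrix (Fin d) (Fin d) ℂ) :
    Matrix (Fin d) (Fin d) ℂ →ₗ[ℂ] Matrix (Fin d) (Fin d) ℂ :=
  (LinearMap.mulLeft ℂ A).comp (LinearMap.mulRight ℂ B)

/-- The completely positive part `𝓛_L(ρ) = ∑ k, L_k ρ L_kᴴ`. -/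
noncomputable def LLop {d κ : ℕ} (L : Fin κ → Matrix (Fin d) (Fin d) ℂ) :
    Matrix (Fin d) (Fin d) ℂ →ₗ[ℂ] Matrix (Fin d) (Fin d) ℂ :=
  ∑ k, sandwich (L k) ((L k)ᴴ)

/-- The superoperator `𝓛_J(ρ) = J ρ + ρ Jᴴ`, as a continuous linear endomorphism. -/
noncomputable def LJop {d : ℕ} (J : Matrix (Fin d) (Fin d) ℂ) :
    Matrix (Fin d) (Fin d) ℂ →L[ℂ] Matrix (Fin d) (Fin d) ℂ :=
  LinearMap.toContinuousLinearMap (LinearMap.mulLeft ℂ J + LinearMap.mulRight ℂ Jᴴ)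

/-- The Lindblad generator
`𝓛(ρ) = -i(Hρ - ρH) + ∑ k (L_k ρ L_kᴴ - ½(L_kᴴ L_k ρ + ρ L_kᴴ L_k))`. -/
noncomputable def lindbladOp {d κ : ℕ} (H : Matrix (Fin d) (Fin d) ℂ)
    (L : Fin κ → Matrix (Fin d) (Fin d) ℂ) :
    Matrix (Fin d) (Fin d) ℂ →L[ℂ] Matrix (Fin d) (Fin d) ℂ :=
  LinearMap.toContinuousLinearMap
    ((-Complex.I) • (LinearMap.mulLeft ℂ H - LinearMap.mulRight ℂ H)
      + ∑ k, (sandwich (L k) ((L k)ᴴ)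
          - (1 / 2 : ℂ) • (LinearMap.mulLeft ℂ ((L k)ᴴ * L k)
              + LinearMap.mulRight ℂ ((L k)ᴴ * L k))))


/-!
Along `r = s + h` the path `r ↦ Ψ(r)(F)` is a polynomial of degree four in `h`, so its second
derivative at `s` is twice its `h²`-coefficient: the sum of the terms in which two of the four
affine factors `I + (Δt - s)J`, `I + sJ`, `(I + sJ)ᴴ`, `(I + (Δt - s)J)ᴴ` have been replaced by
their derivatives `∓J`, `±Jᴴ`.

The trace norm is the maximum of `∑ᵢ |⟪wᵢ, A vᵢ⟫|` over pairs of orthonormal families (by Bessel's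
inequality in a basis of right singular vectors, with equality for the normalised images of those
vectors), hence a seminorm with `‖X A Yᴴ‖₁ ≤ ‖X‖ ‖A‖₁ ‖Y‖` for operator norms `‖X‖ ≤ ‖X‖₁`.
With `α = 1 + (Δt - s)‖J‖₁` and `β = 1 + s‖J‖₁` this bounds the second derivative by
`2 κ_L ‖J‖₁² (α² + 4αβ + β²) ≤ 3 κ_L ‖J‖₁² (2 + ‖J‖₁ Δt)² ≤ 12 κ_L ‖J‖₁² e^{‖J‖₁ Δt}`.
-/

open scoped InnerProductSpace

lemma OrthonormalBasis.sum_norm_inner_le_sum_norm {𝕜 ι κ E F : Type*} [RCLike 𝕜]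
    [Fintype ι] [Fintype κ] [NormedAddCommGroup E] [InnerProductSpace 𝕜 E]
    [NormedAddCommGroup F] [InnerProductSpace 𝕜 F] (p : OrthonormalBasis κ 𝕜 E)
    (T : E →ₗ[𝕜] F) {v : ι → E} {w : ι → F} (hv : Orthonormal 𝕜 v) (hw : Orthonormal 𝕜 w) :
    ∑ i, ‖⟪w i, T (v i)⟫_𝕜‖ ≤ ∑ j, ‖T (p j)‖ := by
  have hexpand (i : ι) : ⟪w i, T (v i)⟫_𝕜 = ∑ j, ⟪p j, v i⟫_𝕜 * ⟪w i, T (p j)⟫_𝕜 := by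
    conv_lhs => rw [← p.sum_repr' (v i)]
    simp only [map_sum, map_smul, inner_sum, inner_smul_right]
  have hcoeff (j : κ) : √(∑ i, ‖⟪p j, v i⟫_𝕜‖ ^ 2) ≤ 1 := by
    refine Real.sqrt_le_one.mpr ?_
    simpa only [norm_inner_symm, p.orthonormal.1 j, one_pow] using
      hv.sum_inner_products_le (x := p j) (s := Finset.univ)
  have himage (j : κ) : √(∑ i, ‖⟪w i, T (p j)⟫_𝕜‖ ^ 2) ≤ ‖T (p j)‖ :=
    Real.sqrt_le_sqrt (hw.sum_inner_products_le _) |>.trans_eq (Real.sqrt_sq (norm_nonneg _))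
  calc ∑ i, ‖⟪w i, T (v i)⟫_𝕜‖
      ≤ ∑ i, ∑ j, ‖⟪p j, v i⟫_𝕜‖ * ‖⟪w i, T (p j)⟫_𝕜‖ := by
        gcongr with i
        rw [hexpand]
        exact (norm_sum_le _ _).trans_eq (by simp only [norm_mul])
    _ = ∑ j, ∑ i, ‖⟪p j, v i⟫_𝕜‖ * ‖⟪w i, T (p j)⟫_𝕜‖ := Finset.sum_comm
    _ ≤ ∑ j, √(∑ i, ‖⟪p j, v i⟫_𝕜‖ ^ 2) * √(∑ i, ‖⟪w i, T (p j)⟫_𝕜‖ ^ 2) := by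
        gcongr with j
        exact Real.sum_mul_le_sqrt_mul_sqrt _ _ _
    _ ≤ ∑ j, ‖T (p j)‖ := by
        gcongr with j
        exact (mul_le_of_le_one_left (Real.sqrt_nonneg _) (hcoeff j)).trans (himage j)

lemma iteratedDeriv_eq_factorial_smul_of_eq_sum_pow_smul {E : Type*} [NormedAddCommGroup E]
    [NormedSpace ℝ E] {n : ℕ} {f : ℝ → E} {s : ℝ} (c : Fin n → E)
    (hf : ∀ h, f (s + h) = ∑ k : Fin n, h ^ (k : ℕ) • c k) (m : Fin n) :
    iteratedDeriv m f s = (m.val.factorial : ℝ) • c m := by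
  set g : ℝ → E := fun h => ∑ k : Fin n, h ^ (k : ℕ) • c k
  have hshift : f = fun z => g (z - s) := by
    funext z; simp only [g, ← hf, add_sub_cancel]
  rw [hshift, iteratedDeriv_comp_sub_const]
  simp only [sub_self, g]
  simp (disch := fun_prop) only [iteratedDeriv_fun_sum, iteratedDeriv_smul_const,
    iteratedDeriv_fun_pow_zero]
  simp [ite_smul, Fin.val_inj]

open Matrix

section TraceNorm

variable {d : ℕ}

noncomputable abbrev rightSingularBasis (A : Matrix (Fin d) (Fin d) ℂ) :
    OrthonormalBasis (Fin d) ℂ (EuclideanSpace ℂ (Fin d)) :=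
  (posSemidef_conjTranspose_mul_self A).1.eigenvectorBasis

lemma toEuclideanCLM_eigenvectorBasis {M : Matrix (Fin d) (Fin d) ℂ} (hM : M.IsHermitian)
    (j : Fin d) :
    toEuclideanCLM (𝕜 := ℂ) M (hM.eigenvectorBasis j) =
      (hM.eigenvalues j : ℂ) • hM.eigenvectorBasis j := by
  apply WithLp.ofLp_injective
  simp only [ofLp_toEuclideanCLM, WithLp.ofLp_smul]
  exact hM.mulVec_eigenvectorBasis j |>.trans (RCLike.real_smul_eq_coe_smul (K := ℂ) _ _)

lemma inner_toEuclideanCLM_toEuclideanCLM (A : Matrix (Fin d) (Fin d) ℂ)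
    (x y : EuclideanSpace ℂ (Fin d)) :
    ⟪toEuclideanCLM (𝕜 := ℂ) A x, toEuclideanCLM (𝕜 := ℂ) A y⟫_ℂ =
      ⟪x, toEuclideanCLM (𝕜 := ℂ) (Aᴴ * A) y⟫_ℂ := by
  rw [map_mul, ← star_eq_conjTranspose, map_star, ContinuousLinearMap.star_eq_adjoint,
    mul_apply_eq_comp, ContinuousLinearMap.adjoint_inner_right]

lemma inner_toEuclideanCLM_rightSingularBasis (A : Matrix (Fin d) (Fin d) ℂ) (i j : Fin d) :
    ⟪toEuclideanCLM (𝕜 := ℂ) A (rightSingularBasis A i),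
      toEuclideanCLM (𝕜 := ℂ) A (rightSingularBasis A j)⟫_ℂ =
      ((posSemidef_conjTranspose_mul_self A).1.eigenvalues j : ℂ) *
        ⟪rightSingularBasis A i, rightSingularBasis A j⟫_ℂ := by
  rw [inner_toEuclideanCLM_toEuclideanCLM, toEuclideanCLM_eigenvectorBasis, inner_smul_right]

lemma norm_toEuclideanCLM_rightSingularBasis (A : Matrix (Fin d) (Fin d) ℂ) (j : Fin d) :
    ‖toEuclideanCLM (𝕜 := ℂ) A (rightSingularBasis A j)‖ =
      √((posSemidef_conjTranspose_mul_self A).1.eigenvalues j) := by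
  rw [← Real.sqrt_sq (norm_nonneg _), ← inner_self_eq_norm_sq (𝕜 := ℂ),
    inner_toEuclideanCLM_rightSingularBasis, (rightSingularBasis A).inner_eq_one j]
  simp

lemma traceNorm_eq_sum_sqrt_eigenvalues (A : Matrix (Fin d) (Fin d) ℂ) :
    traceNorm A = ∑ j, √((posSemidef_conjTranspose_mul_self A).1.eigenvalues j) := by
  set hM := posSemidef_conjTranspose_mul_self A
  rw [traceNorm, PosSemidef.sqrt, mul_assoc, trace_mul_comm, mul_assoc,
    show (star hM.1.eigenvectorUnitary : Matrix (Fin d) (Fin d) ℂ) *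
      hM.1.eigenvectorUnitary.1 = 1 from hM.1.eigenvectorUnitary.2.1,
    mul_one, trace_diagonal, Complex.re_sum]
  simp

lemma traceNorm_eq_sum_norm (A : Matrix (Fin d) (Fin d) ℂ) :
    traceNorm A = ∑ j, ‖toEuclideanCLM (𝕜 := ℂ) A (rightSingularBasis A j)‖ := by
  simp only [traceNorm_eq_sum_sqrt_eigenvalues, norm_toEuclideanCLM_rightSingularBasis]

lemma traceNorm_nonneg (A : Matrix (Fin d) (Fin d) ℂ) : 0 ≤ traceNorm A :=
  traceNorm_eq_sum_norm A ▸ Finset.sum_nonneg fun _ _ => norm_nonneg _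

lemma sum_norm_inner_le_traceNorm {ι : Type*} [Fintype ι] (A : Matrix (Fin d) (Fin d) ℂ)
    {v w : ι → EuclideanSpace ℂ (Fin d)} (hv : Orthonormal ℂ v) (hw : Orthonormal ℂ w) :
    ∑ i, ‖⟪w i, toEuclideanCLM (𝕜 := ℂ) A (v i)⟫_ℂ‖ ≤ traceNorm A :=
  traceNorm_eq_sum_norm A ▸
    (rightSingularBasis A).sum_norm_inner_le_sum_norm
      (toEuclideanCLM (𝕜 := ℂ) A).toLinearMap hv hw

lemma exists_orthonormal_traceNorm_eq_sum_norm_inner (A : Matrix (Fin d) (Fin d) ℂ) :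
    ∃ (s : Finset (Fin d)) (v w : s → EuclideanSpace ℂ (Fin d)),
      Orthonormal ℂ v ∧ Orthonormal ℂ w ∧
        traceNorm A = ∑ i, ‖⟪w i, toEuclideanCLM (𝕜 := ℂ) A (v i)⟫_ℂ‖ := by
  set u := rightSingularBasis A
  set T := toEuclideanCLM (𝕜 := ℂ) A
  have hnormalized (x : EuclideanSpace ℂ (Fin d)) : ‖⟪(‖x‖⁻¹ : ℂ) • x, x⟫_ℂ‖ = ‖x‖ := by
    rcases eq_or_ne x 0 with rfl | hx
    · simp
    rw [inner_smul_left, inner_self_eq_norm_sq_to_K]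
    simp [norm_ne_zero_iff.mpr hx, sq]
  refine ⟨Finset.univ.filter fun j => T (u j) ≠ 0, fun i => u i,
    fun i => (‖T (u i)‖⁻¹ : ℂ) • T (u i), u.orthonormal.comp _ Subtype.val_injective,
    ⟨fun i => norm_smul_inv_norm (Finset.mem_filter.mp i.2).2, ?_⟩, ?_⟩
  · rintro i j hij
    simp only [inner_smul_left, inner_smul_right, T, u, inner_toEuclideanCLM_rightSingularBasis,
      (rightSingularBasis A).orthonormal.2 (Subtype.val_injective.ne hij), mul_zero]
  · rw [Finset.sum_coe_sort _ fun j => ‖⟪(‖T (u j)‖⁻¹ : ℂ) • T (u j), T (u j)⟫_ℂ‖]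
    simp only [hnormalized]
    rw [Finset.sum_filter_of_ne fun j _ h => by simpa using h, traceNorm_eq_sum_norm]

lemma traceNorm_add_le (A B : Matrix (Fin d) (Fin d) ℂ) :
    traceNorm (A + B) ≤ traceNorm A + traceNorm B := by
  obtain ⟨s, v, w, hv, hw, h⟩ := exists_orthonormal_traceNorm_eq_sum_norm_inner (A + B)
  calc traceNorm (A + B)
      ≤ ∑ i, (‖⟪w i, toEuclideanCLM (𝕜 := ℂ) A (v i)⟫_ℂ‖ +
          ‖⟪w i, toEuclideanCLM (𝕜 := ℂ) B (v i)⟫_ℂ‖) := by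
        rw [h]
        gcongr with i
        rw [map_add, _root_.add_apply, inner_add_right]
        exact norm_add_le _ _
    _ ≤ traceNorm A + traceNorm B := by
        rw [Finset.sum_add_distrib]
        exact add_le_add (sum_norm_inner_le_traceNorm A hv hw)
          (sum_norm_inner_le_traceNorm B hv hw)

lemma traceNorm_conjTranspose_le (A : Matrix (Fin d) (Fin d) ℂ) :
    traceNorm Aᴴ ≤ traceNorm A := by
  obtain ⟨s, v, w, hv, hw, h⟩ := exists_orthonormal_traceNorm_eq_sum_norm_inner Aᴴ
  calc traceNorm Aᴴ = ∑ i, ‖⟪v i, toEuclideanCLM (𝕜 := ℂ) A (w i)⟫_ℂ‖ := by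
        refine h.trans (Finset.sum_congr rfl fun i _ => ?_)
        rw [← star_eq_conjTranspose, map_star, ContinuousLinearMap.star_eq_adjoint,
          ContinuousLinearMap.adjoint_inner_right, norm_inner_symm]
    _ ≤ traceNorm A := sum_norm_inner_le_traceNorm A hw hv

lemma traceNorm_conjTranspose (A : Matrix (Fin d) (Fin d) ℂ) : traceNorm Aᴴ = traceNorm A :=
  (traceNorm_conjTranspose_le A).antisymm (by simpa using traceNorm_conjTranspose_le Aᴴ)

lemma norm_toEuclideanCLM_conjTranspose (A : Matrix (Fin d) (Fin d) ℂ) :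
    ‖toEuclideanCLM (𝕜 := ℂ) Aᴴ‖ = ‖toEuclideanCLM (𝕜 := ℂ) A‖ := by
  rw [← star_eq_conjTranspose, map_star, ContinuousLinearMap.star_eq_adjoint,
    LinearIsometryEquiv.norm_map]

lemma norm_toEuclideanCLM_le_traceNorm (A : Matrix (Fin d) (Fin d) ℂ) :
    ‖toEuclideanCLM (𝕜 := ℂ) A‖ ≤ traceNorm A := by
  refine ContinuousLinearMap.opNorm_le_bound _ (traceNorm_nonneg A) fun x => ?_
  set u := rightSingularBasis A
  calc ‖toEuclideanCLM (𝕜 := ℂ) A x‖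
      = ‖∑ j, ⟪u j, x⟫_ℂ • toEuclideanCLM (𝕜 := ℂ) A (u j)‖ := by
        conv_lhs => rw [← u.sum_repr' x]
        simp only [map_sum, map_smul]
    _ ≤ ∑ j, ‖x‖ * ‖toEuclideanCLM (𝕜 := ℂ) A (u j)‖ := by
        refine (norm_sum_le _ _).trans (Finset.sum_le_sum fun j _ => ?_)
        rw [norm_smul]
        gcongr
        simpa [u.orthonormal.1 j] using norm_inner_le_norm (𝕜 := ℂ) (u j) x
    _ = traceNorm A * ‖x‖ := by rw [← Finset.mul_sum, traceNorm_eq_sum_norm, mul_comm]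

lemma traceNorm_mul_le_norm_mul (X A : Matrix (Fin d) (Fin d) ℂ) :
    traceNorm (X * A) ≤ ‖toEuclideanCLM (𝕜 := ℂ) X‖ * traceNorm A := by
  obtain ⟨s, v, w, hv, hw, h⟩ := exists_orthonormal_traceNorm_eq_sum_norm_inner (X * A)
  set p := rightSingularBasis A
  calc traceNorm (X * A) ≤ ∑ j, ‖toEuclideanCLM (𝕜 := ℂ) (X * A) (p j)‖ :=
        h ▸ p.sum_norm_inner_le_sum_norm (toEuclideanCLM (𝕜 := ℂ) (X * A)).toLinearMap hv hw
    _ ≤ ∑ j, ‖toEuclideanCLM (𝕜 := ℂ) X‖ * ‖toEuclideanCLM (𝕜 := ℂ) A (p j)‖ := by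
        gcongr with j
        rw [map_mul, mul_apply_eq_comp]
        exact ContinuousLinearMap.le_opNorm _ _
    _ = ‖toEuclideanCLM (𝕜 := ℂ) X‖ * traceNorm A := by rw [← Finset.mul_sum, traceNorm_eq_sum_norm]

lemma traceNorm_mul_le_mul_norm (A X : Matrix (Fin d) (Fin d) ℂ) :
    traceNorm (A * X) ≤ traceNorm A * ‖toEuclideanCLM (𝕜 := ℂ) X‖ := by
  rw [← traceNorm_conjTranspose, conjTranspose_mul, ← traceNorm_conjTranspose A, mul_comm,
    ← norm_toEuclideanCLM_conjTranspose X]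
  exact traceNorm_mul_le_norm_mul _ _

lemma traceNorm_mul_mul_conjTranspose_le {X A Y : Matrix (Fin d) (Fin d) ℂ} {x a y : ℝ}
    (hX : ‖toEuclideanCLM (𝕜 := ℂ) X‖ ≤ x) (hA : traceNorm A ≤ a)
    (hY : ‖toEuclideanCLM (𝕜 := ℂ) Y‖ ≤ y) : traceNorm (X * A * Yᴴ) ≤ x * a * y := by
  have hx : 0 ≤ x := (norm_nonneg _).trans hX
  have ha : 0 ≤ a := (traceNorm_nonneg A).trans hA
  calc traceNorm (X * A * Yᴴ) ≤ traceNorm (X * A) * ‖toEuclideanCLM (𝕜 := ℂ) Y‖ := by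
        rw [← norm_toEuclideanCLM_conjTranspose Y]
        exact traceNorm_mul_le_mul_norm _ _
    _ ≤ ‖toEuclideanCLM (𝕜 := ℂ) X‖ * traceNorm A * ‖toEuclideanCLM (𝕜 := ℂ) Y‖ := by
        gcongr
        exact traceNorm_mul_le_norm_mul X A
    _ ≤ x * a * y :=
        mul_le_mul (mul_le_mul hX hA (traceNorm_nonneg A) hx) hY (norm_nonneg _) (mul_nonneg hx ha)

lemma norm_toEuclideanCLM_one_add_smul_le (J : Matrix (Fin d) (Fin d) ℂ) {t : ℝ} (ht : 0 ≤ t) :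
    ‖toEuclideanCLM (𝕜 := ℂ) (1 + t • J : Matrix (Fin d) (Fin d) ℂ)‖ ≤ 1 + t * traceNorm J := by
  rw [map_add, map_one, ← Complex.coe_smul, map_smul]
  refine (norm_add_le _ _).trans (add_le_add ContinuousLinearMap.norm_id_le ?_)
  rw [norm_smul, Complex.norm_real, Real.norm_of_nonneg ht]
  gcongr
  exact norm_toEuclideanCLM_le_traceNorm J

end TraceNorm

section ConjugatedPath

variable {n : Type*} [Fintype n] [DecidableEq n] (Φ : Matrix n n ℂ →ₗ[ℂ] Matrix n n ℂ)

lemma add_smul_mul_mul_conjTranspose (P Q X : Matrix n n ℂ) (h : ℝ) :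
    (P + h • Q) * X * (P + h • Q)ᴴ =
      P * X * Pᴴ + h • (Q * X * Pᴴ + P * X * Qᴴ) + h ^ 2 • (Q * X * Qᴴ) := by
  simp only [conjTranspose_add, conjTranspose_smul, star_trivial, add_mul, mul_add,
    smul_mul_assoc, mul_smul_comm, smul_add, smul_smul]
  module

noncomputable def conjugatedPathSecondCoeff (P P₁ B B₁ F : Matrix n n ℂ) : Matrix n n ℂ :=
  P * Φ (B₁ * F * B₁ᴴ) * Pᴴ +
    (P₁ * Φ (B₁ * F * Bᴴ + B * F * B₁ᴴ) * Pᴴ + P * Φ (B₁ * F * Bᴴ + B * F * B₁ᴴ) * P₁ᴴ) +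
    P₁ * Φ (B * F * Bᴴ) * P₁ᴴ

lemma add_smul_mul_map_mul_conjTranspose_eq_sum (P P₁ B B₁ F : Matrix n n ℂ) (h : ℝ) :
    (P + h • P₁) * Φ ((B + h • B₁) * F * (B + h • B₁)ᴴ) * (P + h • P₁)ᴴ =
      ∑ k : Fin 5, h ^ (k : ℕ) • ![P * Φ (B * F * Bᴴ) * Pᴴ,
        P * Φ (B₁ * F * Bᴴ + B * F * B₁ᴴ) * Pᴴ +
          (P₁ * Φ (B * F * Bᴴ) * Pᴴ + P * Φ (B * F * Bᴴ) * P₁ᴴ),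
        conjugatedPathSecondCoeff Φ P P₁ B B₁ F,
        P₁ * Φ (B₁ * F * B₁ᴴ) * Pᴴ + P * Φ (B₁ * F * B₁ᴴ) * P₁ᴴ +
          P₁ * Φ (B₁ * F * Bᴴ + B * F * B₁ᴴ) * P₁ᴴ,
        P₁ * Φ (B₁ * F * B₁ᴴ) * P₁ᴴ] k := by
  rw [add_smul_mul_mul_conjTranspose B B₁ F, map_add, map_add, LinearMap.map_smul_of_tower,
    LinearMap.map_smul_of_tower]
  simp [Fin.sum_univ_five, conjugatedPathSecondCoeff, add_mul, mul_add, smul_add, smul_smul]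
  module

noncomputable def conjugatedPath (J F : Matrix n n ℂ) (Δt r : ℝ) : Matrix n n ℂ :=
  (1 + (Δt - r) • J) * Φ ((1 + r • J) * F * (1 + r • J)ᴴ) * (1 + (Δt - r) • J)ᴴ

lemma iteratedDeriv_two_conjugatedPath (J F : Matrix n n ℂ) (Δt s : ℝ) :
    iteratedDeriv 2 (conjugatedPath Φ J F Δt) s =
      (2 : ℝ) • conjugatedPathSecondCoeff Φ (1 + (Δt - s) • J) (-J) (1 + s • J) J F := by
  have hshift (h : ℝ) : conjugatedPath Φ J F Δt (s + h) = (1 + (Δt - s) • J + h • -J) *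
      Φ ((1 + s • J + h • J) * F * (1 + s • J + h • J)ᴴ) * (1 + (Δt - s) • J + h • -J)ᴴ := by
    rw [conjugatedPath, show (Δt - (s + h)) • J = (Δt - s) • J + h • -J by module, add_smul,
      add_assoc, add_assoc]
  simpa using iteratedDeriv_eq_factorial_smul_of_eq_sum_pow_smul _
    (fun h => (hshift h).trans (add_smul_mul_map_mul_conjTranspose_eq_sum ..)) (2 : Fin 5)

end ConjugatedPath

section Bounds

variable {d : ℕ}

lemma traceNorm_conjugatedPathSecondCoeff_le
    (Φ : Matrix (Fin d) (Fin d) ℂ →ₗ[ℂ] Matrix (Fin d) (Fin d) ℂ) {κ : ℝ} (hκ : 0 ≤ κ)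
    (hΦ : ∀ X, X.IsHermitian → traceNorm (Φ X) ≤ κ * traceNorm X)
    {P P₁ B B₁ F : Matrix (Fin d) (Fin d) ℂ} (hF : F.IsHermitian) {p p₁ b b₁ : ℝ}
    (hP : ‖toEuclideanCLM (𝕜 := ℂ) P‖ ≤ p) (hP₁ : ‖toEuclideanCLM (𝕜 := ℂ) P₁‖ ≤ p₁)
    (hB : ‖toEuclideanCLM (𝕜 := ℂ) B‖ ≤ b) (hB₁ : ‖toEuclideanCLM (𝕜 := ℂ) B₁‖ ≤ b₁) :
    traceNorm (conjugatedPathSecondCoeff Φ P P₁ B B₁ F) ≤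
      κ * traceNorm F * (p ^ 2 * b₁ ^ 2 + 4 * p * p₁ * b * b₁ + p₁ ^ 2 * b ^ 2) := by
  have hcross : (B₁ * F * Bᴴ + B * F * B₁ᴴ).IsHermitian := by
    simpa [conjTranspose_mul, hF.eq, Matrix.mul_assoc] using
      isHermitian_add_transpose_self (B₁ * F * Bᴴ)
  have hN₂ : traceNorm (Φ (B₁ * F * B₁ᴴ)) ≤ κ * (b₁ * traceNorm F * b₁) :=
    (hΦ _ (isHermitian_mul_mul_conjTranspose _ hF)).trans
      (by gcongr; exact traceNorm_mul_mul_conjTranspose_le hB₁ le_rfl hB₁)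
  have hN₁ : traceNorm (Φ (B₁ * F * Bᴴ + B * F * B₁ᴴ)) ≤
      κ * (b₁ * traceNorm F * b + b * traceNorm F * b₁) :=
    (hΦ _ hcross).trans <| by
      gcongr
      exact (traceNorm_add_le _ _).trans
        (add_le_add (traceNorm_mul_mul_conjTranspose_le hB₁ le_rfl hB)
          (traceNorm_mul_mul_conjTranspose_le hB le_rfl hB₁))
  have hN₀ : traceNorm (Φ (B * F * Bᴴ)) ≤ κ * (b * traceNorm F * b) :=
    (hΦ _ (isHermitian_mul_mul_conjTranspose _ hF)).trans
      (by gcongr; exact traceNorm_mul_mul_conjTranspose_le hB le_rfl hB)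
  calc traceNorm (conjugatedPathSecondCoeff Φ P P₁ B B₁ F)
      ≤ p * (κ * (b₁ * traceNorm F * b₁)) * p +
          (p₁ * (κ * (b₁ * traceNorm F * b + b * traceNorm F * b₁)) * p +
            p * (κ * (b₁ * traceNorm F * b + b * traceNorm F * b₁)) * p₁) +
          p₁ * (κ * (b * traceNorm F * b)) * p₁ := by
        refine (traceNorm_add_le _ _).trans (add_le_add ((traceNorm_add_le _ _).trans
          (add_le_add ?_ ((traceNorm_add_le _ _).trans (add_le_add ?_ ?_)))) ?_)
        exacts [traceNorm_mul_mul_conjTranspose_le hP hN₂ hP,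
          traceNorm_mul_mul_conjTranspose_le hP₁ hN₁ hP,
          traceNorm_mul_mul_conjTranspose_le hP hN₁ hP₁,
          traceNorm_mul_mul_conjTranspose_le hP₁ hN₀ hP₁]
    _ = κ * traceNorm F * (p ^ 2 * b₁ ^ 2 + 4 * p * p₁ * b * b₁ + p₁ ^ 2 * b ^ 2) := by ring

lemma two_mul_sq_add_four_mul_add_sq_le_exp {a b : ℝ} (ha : 0 ≤ a) (hb : 0 ≤ b) :
    2 * ((1 + a) ^ 2 + 4 * (1 + a) * (1 + b) + (1 + b) ^ 2) ≤ 12 * Real.exp (a + b) := by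
  nlinarith [Real.quadratic_le_exp_of_nonneg (add_nonneg ha hb), sq_nonneg (a - b)]

lemma two_mul_conjugatedPathSecondCoeff_bound_le {κ f k t₁ t₂ : ℝ} (hκ : 0 ≤ κ) (hf₀ : 0 ≤ f)
    (hf : f ≤ 1) (hk : 0 ≤ k) (ht₁ : 0 ≤ t₁) (ht₂ : 0 ≤ t₂) :
    2 * (κ * f * ((1 + t₁ * k) ^ 2 * k ^ 2 + 4 * (1 + t₁ * k) * k * (1 + t₂ * k) * k +
      k ^ 2 * (1 + t₂ * k) ^ 2)) ≤ 12 * κ * k ^ 2 * Real.exp (k * (t₁ + t₂)) := by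
  have hexp := two_mul_sq_add_four_mul_add_sq_le_exp (mul_nonneg ht₁ hk) (mul_nonneg ht₂ hk)
  rw [show t₁ * k + t₂ * k = k * (t₁ + t₂) by ring] at hexp
  calc _ = κ * k ^ 2 * (f * (2 * ((1 + t₁ * k) ^ 2 + 4 * (1 + t₁ * k) * (1 + t₂ * k) +
        (1 + t₂ * k) ^ 2))) := by ring
    _ ≤ κ * k ^ 2 * (1 * (12 * Real.exp (k * (t₁ + t₂)))) :=
        mul_le_mul_of_nonneg_left ((mul_le_mul_of_nonneg_left hexp hf₀).trans
          (mul_le_mul_of_nonneg_right hf (by positivity))) (by positivity)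
    _ = 12 * κ * k ^ 2 * Real.exp (k * (t₁ + t₂)) := by ring

end Bounds

theorem hessian_bound_general {d κ : ℕ}
    (L : Fin κ → Matrix (Fin d) (Fin d) ℂ)
    (J : Matrix (Fin d) (Fin d) ℂ)
    (κL : ℝ) (hκL : 0 ≤ κL)
    (hbound : ∀ F : Matrix (Fin d) (Fin d) ℂ, F.IsHermitian →
      traceNorm ((LLop L) F) ≤ κL * traceNorm F)
    (Δt : ℝ)
    (Ψ : ℝ → Matrix (Fin d) (Fin d) ℂ → Matrix (Fin d) (Fin d) ℂ)
    (hΨ : Ψ = fun s F =>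
      (1 + (Δt - s) • J) * ((LLop L) ((1 + s • J) * F * (1 + s • J)ᴴ))
        * (1 + (Δt - s) • J)ᴴ) :
    ∀ s ∈ Set.Icc (0 : ℝ) Δt, ∀ F : Matrix (Fin d) (Fin d) ℂ,
      F.IsHermitian → traceNorm F ≤ 1 →
      traceNorm (iteratedDeriv 2 (fun r => Ψ r F) s)
        ≤ 12 * κL * traceNorm J ^ 2 * Real.exp (traceNorm J * Δt) := by
  rintro s ⟨hs, hsΔt⟩ F hF hF₁
  have hpath : (fun r => Ψ r F) = conjugatedPath (LLop L) J F Δt := by subst hΨ; rfl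
  have hJ := norm_toEuclideanCLM_le_traceNorm J
  have hcoeff := traceNorm_conjugatedPathSecondCoeff_le (LLop L) hκL hbound hF
    (norm_toEuclideanCLM_one_add_smul_le J (sub_nonneg.mpr hsΔt)) (P₁ := -J) (p₁ := traceNorm J)
    (by rwa [map_neg, norm_neg]) (norm_toEuclideanCLM_one_add_smul_le J hs) hJ
  rw [hpath, iteratedDeriv_two_conjugatedPath, two_smul]
  calc _ ≤ 2 * traceNorm
          (conjugatedPathSecondCoeff (LLop L) (1 + (Δt - s) • J) (-J) (1 + s • J) J F) :=
        (traceNorm_add_le _ _).trans_eq (two_mul _).symm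
    _ ≤ _ := mul_le_mul_of_nonneg_left hcoeff zero_le_two
    _ ≤ 12 * κL * traceNorm J ^ 2 * Real.exp (traceNorm J * (Δt - s + s)) :=
        two_mul_conjugatedPathSecondCoeff_bound_le hκL (traceNorm_nonneg F) hF₁ (traceNorm_nonneg J)
          (sub_nonneg.mpr hsΔt) hs
    _ = 12 * κL * traceNorm J ^ 2 * Real.exp (traceNorm J * Δt) := by rw [sub_add_cancel]

/-- Lemma 7 of the paper (Hessian bound): with
`Ψ(s)(F) = (I + (Δt-s)J) 𝓛_L((I + sJ) F (I + sJ)ᴴ) (I + (Δt-s)J)ᴴ`,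
for `s ∈ [0, Δt]` and Hermitian `F` with `‖F‖₁ ≤ 1`, the second derivative of
`r ↦ Ψ(r)(F)` at `s` has trace norm at most `12 κ_L ‖J‖₁² e^{‖J‖₁ Δt}`. -/
theorem hessian_bound {d κ : ℕ} (hd : 1 ≤ d) (hκ : 1 ≤ κ)
    (H : Matrix (Fin d) (Fin d) ℂ) (hH : H.IsHermitian)
    (L : Fin κ → Matrix (Fin d) (Fin d) ℂ)
    (Heff J : Matrix (Fin d) (Fin d) ℂ)
    (hHeff : Heff = H - (Complex.I / 2) • ∑ k, (L k)ᴴ * L k)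
    (hJ : J = -(Complex.I • Heff))
    (κL : ℝ) (hκL : 0 ≤ κL)
    (hbound : ∀ F : Matrix (Fin d) (Fin d) ℂ, F.IsHermitian →
      traceNorm ((LLop L) F) ≤ κL * traceNorm F)
    (Δt : ℝ) (hΔt : 0 ≤ Δt)
    (Ψ : ℝ → Matrix (Fin d) (Fin d) ℂ → Matrix (Fin d) (Fin d) ℂ)
    (hΨ : Ψ = fun s F =>
      (1 + (Δt - s) • J) * ((LLop L) ((1 + s • J) * F * (1 + s • J)ᴴ))
        * (1 + (Δt - s) • J)ᴴ) :
    ∀ s ∈ Set.Icc (0 : ℝ) Δt, ∀ F : Matrix (Fin d) (Fin d) ℂ,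
      F.IsHermitian → traceNorm F ≤ 1 →
      traceNorm (iteratedDeriv 2 (fun r => Ψ r F) s)
        ≤ 12 * κL * traceNorm J ^ 2 * Real.exp (traceNorm J * Δt) :=
  hessian_bound_general L J κL hκL hbound Δt Ψ hΨ
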